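/- arXiv:2502.06995 — 3 statements merged into one kernel-verified Lean document; each statement's English description precedes it below -/
import Mathlib

section
/- Let Z_1,...,Z_{n+1} be exchangeable real-valued random variables, and let t be the ⌈(1-α)(n+1)⌉-th smallest value among Z_1,...,Z_n (with t = +∞ if ⌈(1-α)(n+1)⌉ > n). Then P(Z_{n+1} ≤ t) ≥ 1-α. -/
/-!
Let `R j` be the number of scores strictly below `Z j`. Whatever the values, the indices of the
`k` smallest scores (in sorted order) all have `R j < k`, so the probabilities of the events
`{R j < k}` sum to at least `k`. Exchangeability makes these probabilities equal, hence
`(n + 1) P(R (n + 1) < k) ≥ k ≥ (1 - α)(n + 1)`. Finally `Z (n + 1) ≤ t` holds exactly when fewer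
than `k` of `Z 1, …, Z n` lie strictly below `Z (n + 1)`, i.e. when `R (n + 1) < k`.
-/

open MeasureTheory

/-- The `k`-th smallest element of a list of reals (1-indexed). -/
noncomputable def orderStat (k : ℕ) (l : List ℝ) : ℝ :=
  (l.insertionSort (· ≤ ·)).getD (k - 1) 0

open Finset
open scoped ENNReal

theorem List.Pairwise.le_getElem_iff_countP_le {α : Type*} [LinearOrder α] {s : List α}
    (hs : s.Pairwise (· ≤ ·)) {k : ℕ} (hk : k < s.length) (x : α) :
    x ≤ s[k] ↔ s.countP (· < x) ≤ k := by
  have hsplit (m : ℕ) :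
      s.countP (· < x) = (s.take m).countP (· < x) + (s.drop m).countP (· < x) := by
    conv_lhs => rw [← List.take_append_drop m s]
    exact List.countP_append ..
  constructor
  · intro hx
    have hdrop : (s.drop k).countP (· < x) = 0 := by
      refine List.countP_eq_zero.2 fun y hy => ?_
      obtain ⟨i, hi, rfl⟩ := List.getElem_of_mem hy
      rw [List.getElem_drop]
      simpa using hx.trans (hs.rel_get_of_le (a := ⟨k, hk⟩) (b := ⟨k + i, by simp at hi; omega⟩)
        (by simp))
    have htake : (s.take k).countP (· < x) ≤ k :=
      List.countP_le_length.trans (by simp)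
    have := hsplit k
    omega
  · intro hcount
    by_contra! hx
    have htake : (s.take (k + 1)).countP (· < x) = k + 1 := by
      rw [List.countP_eq_length.2, List.length_take_of_le hk]
      intro y hy
      obtain ⟨i, hi, rfl⟩ := List.getElem_of_mem hy
      rw [List.getElem_take]
      simp only [List.length_take] at hi
      simpa using lt_of_le_of_lt (hs.rel_get_of_le (a := ⟨i, by omega⟩) (b := ⟨k, hk⟩)
        (by simp; omega)) hx
    have := hsplit (k + 1)
    omega

theorem le_orderStat_iff {l : List ℝ} {k : ℕ} (hk1 : 1 ≤ k) (hk : k ≤ l.length) (x : ℝ) :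
    x ≤ orderStat k l ↔ l.countP (· < x) < k := by
  rw [orderStat, List.getD_eq_getElem _ _ (by simp; omega),
    (l.pairwise_insertionSort (· ≤ ·)).le_getElem_iff_countP_le,
    (l.perm_insertionSort (· ≤ ·)).countP_eq]
  omega

theorem List.countP_ofFn {α : Type*} {n : ℕ} (p : α → Bool) (f : Fin n → α) :
    (List.ofFn f).countP p = #{i | p (f i)} := by
  induction n with
  | zero => simp
  | succ m ih =>
    rw [List.ofFn_succ, List.countP_cons, ih, Fin.card_filter_univ_succ]
    by_cases h : p (f 0) <;> simp [h, add_comm]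

section StrictRank

variable {ι α : Type*} [Fintype ι] [LinearOrder α]

def strictRank (v : ι → α) (j : ι) : ℕ := #{i | v i < v j}

theorem strictRank_comp_perm (v : ι → α) (σ : Equiv.Perm ι) (j : ι) :
    strictRank (v ∘ σ) j = strictRank v (σ j) :=
  Finset.card_nbij' σ σ.symm (fun i hi => by simpa using hi) (fun i hi => by simpa using hi)
    (fun i _ => by simp) (fun i _ => by simp)

theorem strictRank_sort_le {m : ℕ} (v : Fin m → α) (r : Fin m) :
    strictRank v (Tuple.sort v r) ≤ r := by
  calc strictRank v (Tuple.sort v r) = strictRank (v ∘ Tuple.sort v) r :=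
        (strictRank_comp_perm v _ r).symm
    _ ≤ #(Finset.Iio r) := Finset.card_le_card fun s hs => by
        simp only [Finset.mem_filter, Finset.mem_univ, true_and, Finset.mem_Iio] at hs ⊢
        exact lt_of_not_ge fun hrs => hs.not_ge (Tuple.monotone_sort v hrs)
    _ = r := Fin.card_Iio r

theorem le_card_strictRank_lt {m : ℕ} (v : Fin m → α) {k : ℕ} (hk : k ≤ m) :
    k ≤ #{j | strictRank v j < k} := by
  calc k = #((Finset.univ : Finset (Fin k)).map (Fin.castLEEmb hk)) := by simp
    _ = #(((Finset.univ : Finset (Fin k)).map (Fin.castLEEmb hk)).map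
          (Tuple.sort v).toEmbedding) :=
        (Finset.card_map _).symm
    _ ≤ #{j | strictRank v j < k} := Finset.card_le_card fun j hj => by
        simp only [Finset.mem_map, Finset.mem_univ, true_and, Fin.castLEEmb_apply,
          Equiv.toEmbedding_apply] at hj
        obtain ⟨_, ⟨r, rfl⟩, rfl⟩ := hj
        simpa using (strictRank_sort_le v _).trans_lt r.isLt

theorem strictRank_last_eq_countP {n : ℕ} (v : Fin (n + 1) → α) :
    strictRank v (Fin.last n) =
      (List.ofFn fun i : Fin n => v i.castSucc).countP (· < v (Fin.last n)) := by
  rw [List.countP_ofFn, strictRank, Fin.univ_castSuccEmb, Finset.filter_cons]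
  simp only [lt_self_iff_false, ↓reduceIte, filter_map, Fin.coe_castSuccEmb,
    Function.comp_apply, card_map, decide_eq_true_eq]
  rfl

end StrictRank

theorem measurable_strictRank {ι : Type*} [Fintype ι] (j : ι) :
    Measurable fun v : ι → ℝ => strictRank v j := by
  simp only [strictRank, Finset.card_filter]
  exact Finset.measurable_sum _ fun i _ => Measurable.ite
    (measurableSet_lt (measurable_pi_apply i) (measurable_pi_apply j)) measurable_const
    measurable_const

section Exchangeable

variable {Ω : Type*} [MeasurableSpace Ω] {P : Measure Ω}

theorem measure_strictRank_lt_eq {ι : Type*} [Fintype ι] [DecidableEq ι] {Z : ι → Ω → ℝ}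
    (hZ : ∀ i, Measurable (Z i))
    (hexch : ∀ σ : Equiv.Perm ι,
      Measure.map (fun ω i => Z (σ i) ω) P = Measure.map (fun ω i => Z i ω) P)
    (k : ℕ) (j j' : ι) :
    P {ω | strictRank (Z · ω) j < k} = P {ω | strictRank (Z · ω) j' < k} := by
  set σ := Equiv.swap j j'
  have hS : MeasurableSet {v : ι → ℝ | strictRank v j' < k} :=
    measurableSet_lt (measurable_strictRank j') measurable_const
  have hpre : {ω | strictRank (Z · ω) j < k} =
      (fun ω i => Z (σ i) ω) ⁻¹' {v | strictRank v j' < k} := by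
    ext ω
    change _ < k ↔ strictRank ((Z · ω) ∘ σ) j' < k
    rw [strictRank_comp_perm, Equiv.swap_apply_right]
  rw [hpre, ← Measure.map_apply (measurable_pi_lambda _ fun i => hZ (σ i)) hS, hexch,
    Measure.map_apply (measurable_pi_lambda _ hZ) hS]
  rfl

theorem le_sum_measure_strictRank_lt [IsProbabilityMeasure P] {m : ℕ} {Z : Fin m → Ω → ℝ}
    (hZ : ∀ i, Measurable (Z i)) {k : ℕ} (hk : k ≤ m) :
    (k : ℝ≥0∞) ≤ ∑ j, P {ω | strictRank (Z · ω) j < k} := by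
  have hmeas (j : Fin m) : MeasurableSet {ω | strictRank (Z · ω) j < k} :=
    (measurable_strictRank j).comp (measurable_pi_lambda _ hZ) (measurableSet_Iio (a := k))
  calc (k : ℝ≥0∞) = ∫⁻ _, (k : ℝ≥0∞) ∂P := by simp
    _ ≤ ∫⁻ ω, (#{j | strictRank (Z · ω) j < k} : ℝ≥0∞) ∂P :=
        lintegral_mono fun ω => Nat.cast_le.mpr (le_card_strictRank_lt (Z · ω) hk)
    _ = ∫⁻ ω, ∑ j, {ω | strictRank (Z · ω) j < k}.indicator 1 ω ∂P := by
        simp only [Set.indicator_apply, Set.mem_ofPred_eq, Pi.one_apply, Finset.sum_boole]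
    _ = ∑ j, P {ω | strictRank (Z · ω) j < k} := by
        rw [lintegral_finsetSum _ fun j _ => measurable_one.indicator (hmeas j)]
        simp_rw [lintegral_indicator_one (hmeas _)]

theorem le_mul_measure_strictRank_lt [IsProbabilityMeasure P] {m : ℕ} {Z : Fin m → Ω → ℝ}
    (hZ : ∀ i, Measurable (Z i))
    (hexch : ∀ σ : Equiv.Perm (Fin m),
      Measure.map (fun ω i => Z (σ i) ω) P = Measure.map (fun ω i => Z i ω) P)
    {k : ℕ} (hk : k ≤ m) (j : Fin m) :
    (k : ℝ≥0∞) ≤ m * P {ω | strictRank (Z · ω) j < k} := by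
  calc (k : ℝ≥0∞) ≤ ∑ j, P {ω | strictRank (Z · ω) j < k} := le_sum_measure_strictRank_lt hZ hk
    _ = m * P {ω | strictRank (Z · ω) j < k} := by
      simp [measure_strictRank_lt_eq hZ hexch k _ j]

end Exchangeable

/-- Split-conformal marginal coverage (lower bound): if `Z 0, ..., Z n` are exchangeable,
and `t` is the `⌈(1-α)(n+1)⌉`-th smallest among the first `n` (`t = +∞`, i.e. the event is
trivially true, if `⌈(1-α)(n+1)⌉ > n`), then `P(Z (n+1) ≤ t) ≥ 1 - α`. -/
theorem stmt0 {Ω : Type*} [MeasurableSpace Ω] (P : Measure Ω) [IsProbabilityMeasure P]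
    (n : ℕ) (Z : Fin (n + 1) → Ω → ℝ) (hZ : ∀ i, Measurable (Z i))
    (hexch : ∀ σ : Equiv.Perm (Fin (n + 1)),
      Measure.map (fun ω i => Z (σ i) ω) P = Measure.map (fun ω i => Z i ω) P)
    (α : ℝ) (hα : α ∈ Set.Ioo (0 : ℝ) 1) :
    ENNReal.ofReal (1 - α) ≤
      P {ω | if ⌈(1 - α) * (n + 1)⌉₊ ≤ n then
          Z (Fin.last n) ω ≤
            orderStat ⌈(1 - α) * (n + 1)⌉₊ (List.ofFn fun i : Fin n => Z i.castSucc ω)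
        else True} := by
  obtain ⟨hα0, hα1⟩ := hα
  set k := ⌈(1 - α) * (n + 1)⌉₊ with hk_def
  by_cases hkn : k ≤ n
  swap
  · simpa [hkn] using hα0.le
  have hk1 : 1 ≤ k := Nat.one_le_iff_ne_zero.mpr <| by
    rw [hk_def, ne_eq, Nat.ceil_eq_zero, not_le]
    exact mul_pos (by linarith) (by positivity)
  have hevent : {ω | Z (Fin.last n) ω ≤ orderStat k (List.ofFn fun i : Fin n => Z i.castSucc ω)}
      = {ω | strictRank (Z · ω) (Fin.last n) < k} := by
    ext ω
    simp only [Set.mem_ofPred_eq]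
    rw [le_orderStat_iff hk1 (by simpa using hkn), strictRank_last_eq_countP]
  have hk_ge : ((n + 1 : ℕ) : ℝ≥0∞) * ENNReal.ofReal (1 - α) ≤ k := by
    rw [← ENNReal.ofReal_natCast, ← ENNReal.ofReal_mul (by positivity), mul_comm,
      ← ENNReal.ofReal_natCast k]
    exact ENNReal.ofReal_le_ofReal (by push_cast; exact Nat.le_ceil _)
  simp only [hkn, if_true, hevent]
  have hcov := le_mul_measure_strictRank_lt hZ hexch (by omega : k ≤ n + 1) (Fin.last n)
  exact (ENNReal.mul_le_mul_iff_right (by simp) (by simp)).1 (hk_ge.trans hcov)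
end

section
/- Let Z_1,...,Z_{n+1} be exchangeable real-valued random variables that are almost surely distinct (e.g., their joint distribution is continuous), and let t be the ⌈(1-α)(n+1)⌉-th smallest value among Z_1,...,Z_n. Then P(Z_{n+1} ≤ t) ≤ 1-α + 1/(n+1). -/
/-!
Write `R i = #{j | Z j < Z i}` for the rank of `Z i` among all `n + 1` values and
`k = ⌈(1 - α)(n + 1)⌉`. If `Z (n+1) ≤ t`, at most `k - 1` of `Z 1, …, Z n` lie strictly below
`Z (n+1)`, so `R (n+1) < k`. When the values are distinct their ranks are a permutation of
`0, …, n`, so exactly `k` of the events `{R i < k}` occur; exchangeability makes these events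
equally likely, hence each has probability `k / (n + 1) ≤ 1 - α + 1 / (n + 1)`.
-/

open MeasureTheory Finset
open scoped ENNReal

namespace SplitConformal

section Rank

variable {ι α : Type*} [Fintype ι] [LinearOrder α]

def rank (v : ι → α) (i : ι) : ℕ := #{j | v j < v i}

lemma rank_comp_perm (v : ι → α) (σ : Equiv.Perm ι) (i : ι) :
    rank (v ∘ σ) i = rank v (σ i) :=
  card_equiv σ (by simp)

lemma rank_lt_card (v : ι → α) (i : ι) : rank v i < Fintype.card ι :=
  card_lt_card (filter_ssubset.2 ⟨i, mem_univ _, lt_irrefl _⟩)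

lemma rank_lt_rank {v : ι → α} {i j : ι} (h : v i < v j) : rank v i < rank v j :=
  card_lt_card <| (ssubset_iff_of_subset (monotone_filter_right _ fun _ _ hk => hk.trans h)).2
    ⟨i, by simpa using h, by simp⟩

lemma rank_injective {v : ι → α} (hv : Function.Injective v) : Function.Injective (rank v) := by
  intro i j hij
  by_contra hne
  rcases (hv.ne hne).lt_or_gt with h | h
  exacts [(rank_lt_rank h).ne hij, (rank_lt_rank h).ne' hij]

lemma image_univ_rank {v : ι → α} (hv : Function.Injective v) :
    univ.image (rank v) = range (Fintype.card ι) :=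
  eq_of_subset_of_card_le (fun _ hr => by
      obtain ⟨i, -, rfl⟩ := mem_image.1 hr
      exact mem_range.2 (rank_lt_card v i))
    (by rw [card_image_of_injective _ (rank_injective hv), card_range, card_univ])

lemma card_rank_lt {v : ι → α} (hv : Function.Injective v) {k : ℕ} (hk : k ≤ Fintype.card ι) :
    #{i | rank v i < k} = k := by
  calc #{i | rank v i < k} = #((univ.image (rank v)).filter (· < k)) := by
        rw [filter_image, card_image_of_injective _ (rank_injective hv)]
    _ = k := by
        rw [image_univ_rank hv, show (range (Fintype.card ι)).filter (· < k) = range k by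
          ext; simp only [mem_filter, mem_range]; omega, card_range]

end Rank

lemma countP_ofFn {n : ℕ} {β : Type*} (g : Fin n → β) (p : β → Prop) [DecidablePred p] :
    (List.ofFn g).countP p = #{i | p (g i)} := by
  rw [← Multiset.coe_countP, ← Fin.univ_val_map, Multiset.countP_map]
  rfl

lemma rank_last_eq_countP {n : ℕ} {α : Type*} [LinearOrder α] (v : Fin (n + 1) → α) :
    rank v (Fin.last n) =
      (List.ofFn fun i : Fin n => v i.castSucc).countP (· < v (Fin.last n)) := by
  rw [countP_ofFn, rank, card_filter, card_filter, Fin.sum_univ_castSucc]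
  simp

lemma countP_lt_le_of_le_orderStat {l : List ℝ} {k : ℕ} {x : ℝ} (hk : k - 1 < l.length)
    (hx : x ≤ orderStat k l) : l.countP (· < x) ≤ k - 1 := by
  set s := l.insertionSort (· ≤ · : ℝ → ℝ → Prop)
  have hks : k - 1 < s.length := by rwa [List.length_insertionSort]
  have hxs : x ≤ s[k - 1] := by rwa [orderStat, List.getD_eq_getElem _ _ hks] at hx
  have htail : ∀ y ∈ s.drop (k - 1), s[k - 1] ≤ y := by
    have hsorted := (List.pairwise_insertionSort (· ≤ ·) l).drop (i := k - 1)
    rw [List.drop_eq_getElem_cons hks] at hsorted ⊢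
    rintro y (_ | ⟨_, hy⟩)
    · exact le_rfl
    · exact List.rel_of_pairwise_cons hsorted hy
  have hdrop : (s.drop (k - 1)).countP (· < x) = 0 :=
    List.countP_eq_zero.2 fun y hy => by simpa using hxs.trans (htail y hy)
  have hperm : s.Perm l := List.perm_insertionSort _ l
  rw [← hperm.countP_eq, ← List.take_append_drop (k - 1) s,
    List.countP_append, hdrop, add_zero]
  exact List.countP_le_length.trans (List.length_take_le _ _)

lemma rank_last_lt_of_le_orderStat {n k : ℕ} (v : Fin (n + 1) → ℝ) (hk1 : 1 ≤ k) (hk : k ≤ n)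
    (h : v (Fin.last n) ≤ orderStat k (List.ofFn fun i : Fin n => v i.castSucc)) :
    rank v (Fin.last n) < k := by
  have hcount := countP_lt_le_of_le_orderStat (by rw [List.length_ofFn]; omega) h
  rw [rank_last_eq_countP]
  omega

lemma measurableSet_rank_lt {ι : Type*} [Fintype ι] (i : ι) (k : ℕ) :
    MeasurableSet {v : ι → ℝ | rank v i < k} := by
  have : Measurable fun v : ι → ℝ => rank v i := by
    simp_rw [rank, card_filter]
    exact Finset.measurable_sum _ fun j _ => Measurable.ite
      (measurableSet_lt (measurable_pi_apply j) (measurable_pi_apply i))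
      measurable_const measurable_const
  exact this (measurableSet_lt measurable_id measurable_const)

section Measure

variable {Ω ι : Type*} [MeasurableSpace Ω] [Fintype ι] {μ : Measure Ω}

open Classical in
lemma sum_measure_eq_of_ae_card_eq {s : ι → Set Ω} (hs : ∀ i, MeasurableSet (s i)) {k : ℕ}
    (h : ∀ᵐ ω ∂μ, #{i | ω ∈ s i} = k) : ∑ i, μ (s i) = k * μ Set.univ := by
  have hcount : ∀ᵐ ω ∂μ, ∑ i, (s i).indicator 1 ω = (k : ℝ≥0∞) := by
    filter_upwards [h] with ω hω
    simp [Set.indicator_apply, hω]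
  simp_rw [← lintegral_indicator_one (hs _)]
  rw [← lintegral_finsetSum _ fun i _ => measurable_one.indicator (hs i),
    lintegral_congr_ae hcount, lintegral_const]

lemma measure_rank_lt_eq {f : Ω → ι → ℝ} (hf : Measurable f)
    (hexch : ∀ σ : Equiv.Perm ι, μ.map (fun ω => f ω ∘ σ) = μ.map f) (i j : ι) (k : ℕ) :
    μ {ω | rank (f ω) i < k} = μ {ω | rank (f ω) j < k} := by
  classical
  have h := congrArg (· {v | rank v i < k}) (hexch (Equiv.swap i j))
  rw [Measure.map_apply (by fun_prop) (measurableSet_rank_lt i k),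
    Measure.map_apply hf (measurableSet_rank_lt i k)] at h
  simpa [Set.preimage, rank_comp_perm] using h.symm

lemma card_mul_measure_rank_lt {f : Ω → ι → ℝ} (hf : Measurable f)
    (hexch : ∀ σ : Equiv.Perm ι, μ.map (fun ω => f ω ∘ σ) = μ.map f)
    (hinj : ∀ᵐ ω ∂μ, Function.Injective (f ω)) {k : ℕ} (hk : k ≤ Fintype.card ι) (j : ι) :
    Fintype.card ι * μ {ω | rank (f ω) j < k} = k * μ Set.univ := by
  have hsum := sum_measure_eq_of_ae_card_eq (μ := μ) (s := fun i => {ω | rank (f ω) i < k})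
    (fun i => hf (measurableSet_rank_lt i k))
    (hinj.mono fun ω hω => by simpa using card_rank_lt hω hk)
  simp_rw [measure_rank_lt_eq hf hexch _ j k, sum_const, card_univ, nsmul_eq_mul] at hsum
  exact hsum

end Measure

lemma ae_injective_of_measure_eq_zero {Ω ι : Type*} [MeasurableSpace Ω] [Countable ι]
    {μ : Measure Ω} {f : Ω → ι → ℝ} (h : ∀ i j, i ≠ j → μ {ω | f ω i = f ω j} = 0) :
    ∀ᵐ ω ∂μ, Function.Injective (f ω) := by
  have : ∀ᵐ ω ∂μ, ∀ i j, i ≠ j → f ω i ≠ f ω j :=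
    ae_all_iff.2 fun i => ae_all_iff.2 fun j => by
      by_cases hij : i = j
      · exact Filter.Eventually.of_forall fun _ h => (h hij).elim
      · filter_upwards [measure_eq_zero_iff_ae_notMem.1 (h i j hij)] with ω hω _ using hω
  filter_upwards [this] with ω hω i j hij
  by_contra hne
  exact hω i j hne hij

lemma natCeil_div_le {α : ℝ} (hα : α ≤ 1) (n : ℕ) :
    (⌈(1 - α) * (n + 1)⌉₊ : ℝ) / (n + 1) ≤ 1 - α + 1 / (n + 1) := by
  have hceil := Nat.ceil_lt_add_one (mul_nonneg (sub_nonneg.2 hα) (n.cast_add_one_pos (α := ℝ)).le)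
  rw [div_le_iff₀ (by positivity), add_mul, one_div_mul_cancel (by positivity)]
  linarith

end SplitConformal

open SplitConformal

/-- Split-conformal coverage upper bound: if `Z 0, ..., Z n` are exchangeable and
almost surely distinct, and `t` is the `⌈(1-α)(n+1)⌉`-th smallest among the first `n`
(assuming `⌈(1-α)(n+1)⌉ ≤ n`), then `P(Z (n+1) ≤ t) ≤ 1 - α + 1/(n+1)`. -/
theorem stmt1 {Ω : Type*} [MeasurableSpace Ω] (P : Measure Ω) [IsProbabilityMeasure P]
    (n : ℕ) (Z : Fin (n + 1) → Ω → ℝ) (hZ : ∀ i, Measurable (Z i))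
    (hexch : ∀ σ : Equiv.Perm (Fin (n + 1)),
      Measure.map (fun ω i => Z (σ i) ω) P = Measure.map (fun ω i => Z i ω) P)
    (hdist : ∀ i j : Fin (n + 1), i ≠ j → P {ω | Z i ω = Z j ω} = 0)
    (α : ℝ) (hα : α ∈ Set.Ioo (0 : ℝ) 1)
    (hk : ⌈(1 - α) * (n + 1)⌉₊ ≤ n) :
    P {ω | Z (Fin.last n) ω ≤
        orderStat ⌈(1 - α) * (n + 1)⌉₊ (List.ofFn fun i : Fin n => Z i.castSucc ω)} ≤
      ENNReal.ofReal (1 - α + 1 / (n + 1)) := by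
  set k := ⌈(1 - α) * (n + 1)⌉₊
  have hk1 : 1 ≤ k := Nat.one_le_ceil_iff.2 (mul_pos (sub_pos.2 hα.2) n.cast_add_one_pos)
  have hcard := card_mul_measure_rank_lt (f := fun ω i => Z i ω) (measurable_pi_lambda _ hZ) hexch
    (ae_injective_of_measure_eq_zero hdist) (k := k) (by rw [Fintype.card_fin]; omega) (Fin.last n)
  have hrank : P {ω | rank (fun i => Z i ω) (Fin.last n) < k} = ENNReal.ofReal (k / (n + 1)) := by
    rw [ENNReal.ofReal_div_of_pos n.cast_add_one_pos, ← Nat.cast_add_one, ENNReal.ofReal_natCast,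
      ENNReal.ofReal_natCast, ENNReal.eq_div_iff (by simp) (by simp)]
    simpa using hcard
  calc _ ≤ P {ω | rank (fun i => Z i ω) (Fin.last n) < k} :=
        measure_mono fun ω => rank_last_lt_of_le_orderStat _ hk1 hk
    _ ≤ _ := hrank ▸ ENNReal.ofReal_le_ofReal (natCeil_div_le hα.2.le n)
end

section
/- Let F_n and F be CDFs on ℝ with sup_s |F_n(s) - F(s)| → 0, and suppose t_n → t where t is a continuity point of the quantile function of F in the sense that F is continuous and strictly increasing at F^{-1}(t). Then F_n^{-1}(t_n) → F^{-1}(t), where F^{-1}(u) = inf{s : F(s) ≥ u}. -/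
/-- Convergence of quantiles: if `Fₙ → F` uniformly, `tₙ → t`, and `F` is continuous and
strictly increasing at `F⁻¹(t)`, then `Fₙ⁻¹(tₙ) → F⁻¹(t)`, where
`F⁻¹(u) = inf {s : F s ≥ u}`. -/
theorem stmt11 (Fn : ℕ → ℝ → ℝ) (F : ℝ → ℝ)
    (hFnm : ∀ n, Monotone (Fn n)) (hFm : Monotone F) (hFc : Continuous F)
    (hunif : TendstoUniformly Fn F Filter.atTop)
    (t : ℝ) (tn : ℕ → ℝ) (htn : Filter.Tendsto tn Filter.atTop (nhds t))
    (hstrict₁ : ∀ s, s < sInf {u | t ≤ F u} → F s < t)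
    (hstrict₂ : ∀ s, sInf {u | t ≤ F u} < s → t < F s) :
    Filter.Tendsto (fun n => sInf {u | tn n ≤ Fn n u}) Filter.atTop
      (nhds (sInf {u | t ≤ F u})) := by
  set q := sInf {u | t ≤ F u} with hq
  rw [Metric.tendsto_nhds]
  intro ε hε
  have hε'pos : 0 < ε / 2 := by positivity
  have h1 : F (q - ε / 2) < t := hstrict₁ _ (by linarith)
  have h2 : t < F (q + ε / 2) := hstrict₂ _ (by linarith)
  set δ := min (t - F (q - ε / 2)) (F (q + ε / 2) - t) with hδ
  have hδpos : 0 < δ := lt_min (by linarith) (by linarith)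
  have hδ1 : δ ≤ t - F (q - ε / 2) := min_le_left _ _
  have hδ2 : δ ≤ F (q + ε / 2) - t := min_le_right _ _
  have hu := (Metric.tendstoUniformly_iff.mp hunif) (δ / 2) (by positivity)
  have ht := (Metric.tendsto_nhds.mp htn) (δ / 2) (by positivity)
  filter_upwards [hu, ht] with n hun htnn
  have htd : |tn n - t| < δ / 2 := by
    simpa [Real.dist_eq] using htnn
  have hmem : tn n ≤ Fn n (q + ε / 2) := by
    have := hun (q + ε / 2)
    rw [Real.dist_eq] at this
    have h3 : F (q + ε / 2) - Fn n (q + ε / 2) < δ / 2 := lt_of_le_of_lt (le_abs_self _) this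
    have h4 : tn n - t < δ / 2 := lt_of_le_of_lt (le_abs_self _) htd
    linarith
  have hlb : ∀ u ∈ {u | tn n ≤ Fn n u}, q - ε / 2 ≤ u := by
    intro u hu'
    by_contra hcon
    push_neg at hcon
    have hmono : Fn n u ≤ Fn n (q - ε / 2) := hFnm n hcon.le
    have := hun (q - ε / 2)
    rw [Real.dist_eq] at this
    have h3 : -(δ / 2) < F (q - ε / 2) - Fn n (q - ε / 2) := neg_lt_of_abs_lt this
    have h4 : -(δ / 2) < tn n - t := neg_lt_of_abs_lt htd
    have : Fn n u < tn n := by linarith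
    exact absurd hu' (by simpa using this.not_ge)
  have hne : (q + ε / 2) ∈ {u | tn n ≤ Fn n u} := hmem
  have hbdd : BddBelow {u | tn n ≤ Fn n u} := ⟨q - ε / 2, hlb⟩
  have hle : sInf {u | tn n ≤ Fn n u} ≤ q + ε / 2 := csInf_le hbdd hne
  have hge : q - ε / 2 ≤ sInf {u | tn n ≤ Fn n u} := le_csInf ⟨_, hne⟩ hlb
  rw [Real.dist_eq, abs_lt]
  constructor <;> linarith
end
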